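/- arXiv:1707.08243 — 3 statements merged into one kernel-verified Lean document; each statement's English description precedes it below -/
import Mathlib

section
/- Let (A(p), B(p)) be a linearly parameterized matrix pair. Then every minor of the n×(n+m) partitioned matrix [A(p) B(p)] is a multilinear polynomial in the parameters p_1,…,p_q, i.e., of degree at most 1 in each p_k. -/
open Matrix BigOperators

namespace StructCtrl

/-- A general linearly parameterized `n1 × n2` matrix `M(p) = ∑ k, p k • (g k * h k)`,
with columns `g k` and rows `h k`. -/
noncomputable def paramMat {q n1 n2 : ℕ} (g : Fin q → Fin n1 → ℝ) (h : Fin q → Fin n2 → ℝ)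
    (p : Fin q → ℝ) : Matrix (Fin n1) (Fin n2) ℝ :=
  Matrix.of fun i j => ∑ k : Fin q, p k * (g k i * h k j)

/-- Generic rank: the maximum over `p ∈ ℝ^q` of the rank of `M(p)`. -/
noncomputable def genericRank {q n1 n2 : ℕ} (g : Fin q → Fin n1 → ℝ)
    (h : Fin q → Fin n2 → ℝ) : ℕ :=
  ⨆ p : Fin q → ℝ, (paramMat g h p).rank

/-- `A(p)`: the `n × n` matrix of the first `n` columns of `[A(p) B(p)]`. -/
noncomputable def Amat {n m q : ℕ} (g : Fin q → Fin n → ℝ) (h : Fin q → Fin (n + m) → ℝ)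
    (p : Fin q → ℝ) : Matrix (Fin n) (Fin n) ℝ :=
  Matrix.of fun i j => paramMat g h p i (Fin.castAdd m j)

/-- `B(p)`: the `n × m` matrix of the last `m` columns of `[A(p) B(p)]`. -/
noncomputable def Bmat {n m q : ℕ} (g : Fin q → Fin n → ℝ) (h : Fin q → Fin (n + m) → ℝ)
    (p : Fin q → ℝ) : Matrix (Fin n) (Fin m) ℝ :=
  Matrix.of fun i j => paramMat g h p i (Fin.natAdd n j)

/-- Controllability matrix `[B  AB  …  A^{n-1}B]` (columns indexed by `Fin n × Fin m`). -/
noncomputable def ctrbMat {n m : ℕ} (A : Matrix (Fin n) (Fin n) ℝ)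
    (B : Matrix (Fin n) (Fin m) ℝ) : Matrix (Fin n) (Fin n × Fin m) ℝ :=
  Matrix.of fun i kj => (A ^ (kj.1 : ℕ) * B) i kj.2

/-- `(A, B)` is structurally controllable: for some parameter value the controllability
matrix has full rank `n`. -/
def StructurallyControllable {n m q : ℕ} (g : Fin q → Fin n → ℝ)
    (h : Fin q → Fin (n + m) → ℝ) : Prop :=
  ∃ p : Fin q → ℝ, (ctrbMat (Amat g h p) (Bmat g h p)).rank = n

/-- The binary assumption: all entries of every `g k` and every `h k` are `0` or `1`. -/
def BinaryAssumption {n m q : ℕ} (g : Fin q → Fin n → ℝ)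
    (h : Fin q → Fin (n + m) → ℝ) : Prop :=
  (∀ k i, g k i = 0 ∨ g k i = 1) ∧ (∀ k j, h k j = 0 ∨ h k j = 1)

/-- The unitary assumption: every `g k` and every `h k` is a standard unit vector, and the
pairs `(g k, h k)` are pairwise distinct. -/
def UnitaryAssumption {n m q : ℕ} (g : Fin q → Fin n → ℝ)
    (h : Fin q → Fin (n + m) → ℝ) : Prop :=
  (∀ k, ∃ i : Fin n, g k = Pi.single i 1) ∧
  (∀ k, ∃ j : Fin (n + m), h k = Pi.single j 1) ∧
  (∀ k k', k ≠ k' → (g k, h k) ≠ (g k', h k'))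

/-- `(A, B)` is reducible: some simultaneous permutation of the states puts the pair,
for all parameter values, in block-triangular form with a zero top-right `n1 × (n - n1)`
block of `A` and a zero top `n1 × m` block of `B`, where `1 ≤ n1 < n`. -/
def Reducible {n m q : ℕ} (g : Fin q → Fin n → ℝ) (h : Fin q → Fin (n + m) → ℝ) : Prop :=
  ∃ (σ : Equiv.Perm (Fin n)) (n1 : ℕ), 1 ≤ n1 ∧ n1 < n ∧ ∀ p : Fin q → ℝ,
    (∀ i j : Fin n, (i : ℕ) < n1 → n1 ≤ (j : ℕ) → Amat g h p (σ i) (σ j) = 0) ∧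
    (∀ i : Fin n, (i : ℕ) < n1 → ∀ jb : Fin m, Bmat g h p (σ i) jb = 0)

/-- `(A, B)` is irreducible. -/
def PairIrreducible {n m q : ℕ} (g : Fin q → Fin n → ℝ)
    (h : Fin q → Fin (n + m) → ℝ) : Prop :=
  ¬ Reducible g h

/-- Arc (of any color) of the graph `𝔾` of `(A, B)` from vertex `a` to vertex `b`:
`b` is a row-vertex `i` (one of the first `n` vertices) and the `(i, a)` entry of some
`g k * h k` is nonzero. -/
def HasArc {n m q : ℕ} (g : Fin q → Fin n → ℝ) (h : Fin q → Fin (n + m) → ℝ)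
    (a b : Fin (n + m)) : Prop :=
  ∃ (k : Fin q) (i : Fin n), b = Fin.castAdd m i ∧ g k i * h k a ≠ 0

/-- `𝔾` has a spanning forest rooted at the `m` input vertices `n+1, …, n+m`: every other
vertex is reachable from some input vertex by a directed path. -/
def HasSpanningForestAtInputs {n m q : ℕ} (g : Fin q → Fin n → ℝ)
    (h : Fin q → Fin (n + m) → ℝ) : Prop :=
  ∀ v : Fin (n + m), (¬ ∃ j : Fin m, Fin.natAdd n j = v) →
    ∃ j : Fin m, Relation.ReflTransGen (HasArc g h) (Fin.natAdd n j) v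

/-- A multi-colored subgraph of `𝔾`, encoded by the data of its `n` arcs: each of the
vertices `1, …, n` is the head of exactly one arc, with tail `t i` and color `c i`.
Injectivity of `t` and of `c` says no two arcs share a start vertex or a color (no two
share an end vertex by construction); such a spanning subgraph is exactly a disjoint union
of `m` directed path graphs (whose sources are the `m` input vertices) and directed cycle
graphs, with all arc colors distinct. -/
def IsMCS {n m q : ℕ} (g : Fin q → Fin n → ℝ) (h : Fin q → Fin (n + m) → ℝ)
    (t : Fin n → Fin (n + m)) (c : Fin n → Fin q) : Prop :=
  Function.Injective t ∧ Function.Injective c ∧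
    ∀ i : Fin n, g (c i) i * h (c i) (t i) ≠ 0

/-- A pure sink of the multi-colored subgraph with tail map `t`: a sink that is not a
source (i.e. has no outgoing arc, and is one of the first `n` vertices). -/
def IsPureSink {n m : ℕ} (t : Fin n → Fin (n + m)) (v : Fin (n + m)) : Prop :=
  (¬ ∃ i : Fin n, t i = v) ∧ ∃ i : Fin n, Fin.castAdd m i = v

/-- A pure source: a source (one of the last `m` vertices) that is not a sink. -/
def IsPureSource {n m : ℕ} (t : Fin n → Fin (n + m)) (v : Fin (n + m)) : Prop :=
  (∃ i : Fin n, t i = v) ∧ ∃ j : Fin m, Fin.natAdd n j = v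

/-- A matrimonial partition, encoded by a permutation `μ` that matches each pure sink with
a distinct pure source (the two-element cells are the pairs `{v, μ v}` for `v` a pure sink;
all other vertices lie in singleton cells). -/
def IsMatrimonial {n m : ℕ} (t : Fin n → Fin (n + m)) (μ : Equiv.Perm (Fin (n + m))) : Prop :=
  ∀ v, IsPureSink t v ↔ IsPureSource t (μ v)

/-- The successor map of the quotient of a multi-colored subgraph by a matrimonial
partition: each vertex with an outgoing arc is sent to the head of that arc, each pure
sink is welded to (sent to) its paired pure source, and isolated vertices stay put. -/
noncomputable def weldMap {n m : ℕ} (t : Fin n → Fin (n + m))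
    (μ : Equiv.Perm (Fin (n + m))) (v : Fin (n + m)) : Fin (n + m) :=
  if hv : ∃ i : Fin n, t i = v then Fin.castAdd m hv.choose
  else if ∃ i : Fin n, Fin.castAdd m i = v then μ v else v

/-- Number of orbits of a self-map of `Fin N`. -/
noncomputable def orbitCount {N : ℕ} (f : Fin N → Fin N) : ℕ :=
  (Set.range fun v => {w | ∃ a b : ℕ, f^[a] v = f^[b] w}).ncard

/-- Number of isolated vertices of a multi-colored subgraph (vertices that are both a
source and a sink). -/
noncomputable def isolatedCount {n m : ℕ} (t : Fin n → Fin (n + m)) : ℕ :=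
  {v : Fin (n + m) | (¬ ∃ i : Fin n, t i = v) ∧ ∃ j : Fin m, Fin.natAdd n j = v}.ncard

/-- The number of directed cycle graphs in the quotient of a multi-colored subgraph by a
matrimonial partition: every orbit of the weld map, except the (singleton) orbits of the
isolated vertices, yields exactly one cycle graph of the quotient. -/
noncomputable def quotCycleCount {n m : ℕ} (t : Fin n → Fin (n + m))
    (μ : Equiv.Perm (Fin (n + m))) : ℕ :=
  orbitCount (weldMap t μ) - isolatedCount t

/-- `𝔾` has an unbalanced similarity class of multi-colored subgraphs: for some
multi-colored subgraph `(t, c)` and some matrimonial partition `μ` for its class, the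
numbers of odd and of even multi-colored subgraphs in its similarity class (same sink set,
i.e. same `Set.range t`, and same color set `Set.range c`) differ. -/
def HasUnbalancedClass {n m q : ℕ} (g : Fin q → Fin n → ℝ)
    (h : Fin q → Fin (n + m) → ℝ) : Prop :=
  ∃ (t : Fin n → Fin (n + m)) (c : Fin n → Fin q) (μ : Equiv.Perm (Fin (n + m))),
    IsMCS g h t c ∧ IsMatrimonial t μ ∧
    {tc : (Fin n → Fin (n + m)) × (Fin n → Fin q) |
        IsMCS g h tc.1 tc.2 ∧ Set.range tc.1 = Set.range t ∧
        Set.range tc.2 = Set.range c ∧ Odd (quotCycleCount tc.1 μ)}.ncard ≠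
      {tc : (Fin n → Fin (n + m)) × (Fin n → Fin q) |
        IsMCS g h tc.1 tc.2 ∧ Set.range tc.1 = Set.range t ∧
        Set.range tc.2 = Set.range c ∧ Even (quotCycleCount tc.1 μ)}.ncard

/-- Arc set of the directed path graph whose vertices, in order, are the list `l`. -/
def pathArcs {V : Type*} (l : List V) : Set (V × V) :=
  {a | ∃ k : ℕ, l[k]? = some a.1 ∧ l[k + 1]? = some a.2}

/-- Arc set of the directed cycle graph whose vertices, in cyclic order, are the list `l`. -/
def cycleArcs {V : Type*} (l : List V) : Set (V × V) :=
  pathArcs l ∪ {a | ∃ x y, l.getLast? = some x ∧ l.head? = some y ∧ a = (x, y)}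

/-- A cactus graph with vertex set `W`, arc set `E` and root `r`: a trunk (a directed path
graph, possibly a single vertex, starting at `r`) together with any number of buds, each
bud being a directed cycle graph together with a stem arc from a vertex already in the
graph (on the trunk or on the cycle of another bud) to a vertex of the cycle. -/
inductive IsCactus {V : Type*} : Set V → Set (V × V) → V → Prop where
  | trunk (r : V) (l : List V) (hnd : l.Nodup) (hhead : l.head? = some r) :
      IsCactus {v | v ∈ l} (pathArcs l) r
  | bud (r : V) (W : Set V) (E : Set (V × V)) (l : List V) (w u : V)
      (hc : IsCactus W E r) (hnd : l.Nodup) (hne : l ≠ [])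
      (hdisj : ∀ v ∈ l, v ∉ W) (hw : w ∈ W) (hu : u ∈ l) :
      IsCactus (W ∪ {v | v ∈ l}) (E ∪ cycleArcs l ∪ {(w, u)}) r

/-- `𝔾` has a spanning subgraph which is a disjoint union of `m` cactus graphs rooted at
the `m` input vertices `n+1, …, n+m`, respectively. -/
def HasSpanningCacti {n m q : ℕ} (g : Fin q → Fin n → ℝ)
    (h : Fin q → Fin (n + m) → ℝ) : Prop :=
  ∃ (W : Fin m → Set (Fin (n + m))) (F : Fin m → Set (Fin (n + m) × Fin (n + m))),
    (∀ j, IsCactus (W j) (F j) (Fin.natAdd n j)) ∧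
    (∀ j, ∀ a ∈ F j, HasArc g h a.1 a.2) ∧
    Pairwise (fun j j' => Disjoint (W j) (W j')) ∧
    (⋃ j, W j) = Set.univ

/-- Rank of the submatrix `G_S` whose columns are the `g i`, `i ∈ S`. -/
noncomputable def rankCols {q n1 : ℕ} (g : Fin q → Fin n1 → ℝ) (S : Finset (Fin q)) : ℕ :=
  (Matrix.of fun (i : Fin n1) (k : {x // x ∈ S}) => g k.1 i).rank

/-- Rank of the submatrix `H_S` whose rows are the `h i`, `i ∈ S`. -/
noncomputable def rankRows {q n2 : ℕ} (h : Fin q → Fin n2 → ℝ) (S : Finset (Fin q)) : ℕ :=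
  (Matrix.of fun (k : {x // x ∈ S}) (j : Fin n2) => h k.1 j).rank

/-- `I` is a jointly independent index set of `(G, H)`: both `{g i : i ∈ I}` and
`{h i : i ∈ I}` are linearly independent families. -/
def JointlyIndependent {q n1 n2 : ℕ} (g : Fin q → Fin n1 → ℝ) (h : Fin q → Fin n2 → ℝ)
    (I : Finset (Fin q)) : Prop :=
  LinearIndependent ℝ (fun i : {x // x ∈ I} => g i.1) ∧
  LinearIndependent ℝ (fun i : {x // x ∈ I} => h i.1)

/-- Maximum cardinality of a nonempty jointly independent index set of `(G, H)`,
taken to be `0` if none exists. -/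
noncomputable def maxJointIndep {q n1 n2 : ℕ} (g : Fin q → Fin n1 → ℝ)
    (h : Fin q → Fin n2 → ℝ) : ℕ :=
  sSup (insert 0 {c : ℕ | ∃ I : Finset (Fin q), I.Nonempty ∧
    JointlyIndependent g h I ∧ I.card = c})

/-- Arcs of the transfer graph of `{G_𝐪, H_𝐪}`; vertex `0` is `none`, vertex `i ∈ 𝐪`
is `some i`.  There is an arc from `0` to `i` iff `h_{i2} ≠ 0`, and an arc from `j` to `i`
iff the scalar `h_{i1} g_j` is nonzero. -/
def TArc {n m q : ℕ} (g : Fin q → Fin n → ℝ) (h : Fin q → Fin (n + m) → ℝ) :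
    Option (Fin q) → Option (Fin q) → Prop
  | none, some i => ∃ j : Fin m, h i (Fin.natAdd n j) ≠ 0
  | some j, some i => (∑ l : Fin n, h i (Fin.castAdd m l) * g j l) ≠ 0
  | _, none => False

/-- The transfer graph has a spanning tree rooted at vertex `0`: every vertex `1, …, q`
is reachable from vertex `0` by a directed path. -/
def TransferRootedAtZero {n m q : ℕ} (g : Fin q → Fin n → ℝ)
    (h : Fin q → Fin (n + m) → ℝ) : Prop :=
  ∀ i : Fin q, Relation.ReflTransGen (TArc g h) none (some i)


/-- Every minor of the partitioned matrix `[A(p) B(p)]` of a linearly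
parameterized matrix pair, viewed as a polynomial in the indeterminates `p 1, …, p q`,
is multilinear: it has degree at most `1` in each variable `p k`. -/
theorem stmt13 (n m q : ℕ) (hn : 1 ≤ n) (hm : 1 ≤ m) (hq : 1 ≤ q)
    (g : Fin q → Fin n → ℝ) (h : Fin q → Fin (n + m) → ℝ)
    (r : ℕ) (ρ : Fin r → Fin n) (τ : Fin r → Fin (n + m))
    (hρ : Function.Injective ρ) (hτ : Function.Injective τ) (k : Fin q) :
    MvPolynomial.degreeOf k
      (Matrix.det (Matrix.of fun a b : Fin r =>
        ∑ l : Fin q, MvPolynomial.C (g l (ρ a) * h l (τ b)) * MvPolynomial.X l)) ≤ 1 := by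
  classical
  set R := MvPolynomial (Fin q) ℝ
  set vrow : Fin q → (Fin r → R) := fun l b => MvPolynomial.C (h l (τ b)) with hvrow
  set c : (Fin r → Fin q) → Fin r → R :=
    fun f a => MvPolynomial.C (g (f a) (ρ a)) * MvPolynomial.X (f a) with hc
  have hexp : Matrix.det (Matrix.of fun a b : Fin r =>
        ∑ l : Fin q, MvPolynomial.C (g l (ρ a) * h l (τ b)) * MvPolynomial.X l)
      = ∑ f : Fin r → Fin q,
          (∏ a : Fin r, c f a) • (Matrix.detRowAlternating (fun a => vrow (f a))) := by
    have h1 : (Matrix.of fun a b : Fin r =>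
        ∑ l : Fin q, MvPolynomial.C (g l (ρ a) * h l (τ b)) * MvPolynomial.X l)
        = fun a => ∑ l : Fin q,
          (MvPolynomial.C (g l (ρ a)) * MvPolynomial.X l) • vrow l := by
      funext a b
      simp only [Matrix.of_apply, Finset.sum_apply, Pi.smul_apply, smul_eq_mul, hvrow]
      refine Finset.sum_congr rfl fun l _ => ?_
      rw [MvPolynomial.C_mul]
      ring
    show Matrix.detRowAlternating _ = _
    rw [h1, ← AlternatingMap.coe_multilinearMap]
    rw [MultilinearMap.map_sum _
      (g := fun a l => (MvPolynomial.C (g l (ρ a)) * MvPolynomial.X l) • vrow l)]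
    refine Finset.sum_congr rfl fun f _ => ?_
    exact MultilinearMap.map_smul_univ _
      (fun a => MvPolynomial.C (g (f a) (ρ a)) * MvPolynomial.X (f a)) (fun a => vrow (f a))
  rw [hexp]
  refine (MvPolynomial.degreeOf_sum_le _ _ _).trans (Finset.sup_le fun f _ => ?_)
  by_cases hf : Function.Injective f
  · -- injective case
    have hdet : Matrix.detRowAlternating (fun a => vrow (f a))
        = MvPolynomial.C (Matrix.det (Matrix.of fun a b : Fin r => h (f a) (τ b))) := by
      rw [(MvPolynomial.C : ℝ →+* R).map_det]
      rfl
    rw [hdet, smul_eq_mul]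
    refine (MvPolynomial.degreeOf_mul_le _ _ _).trans ?_
    rw [MvPolynomial.degreeOf_C, add_zero]
    refine (MvPolynomial.degreeOf_prod_le _ _ _).trans ?_
    have hterm : ∀ a : Fin r, (c f a).degreeOf k ≤ if k = f a then 1 else 0 := by
      intro a
      refine (MvPolynomial.degreeOf_mul_le _ _ _).trans ?_
      rw [MvPolynomial.degreeOf_C, zero_add, MvPolynomial.degreeOf_X]
    refine (Finset.sum_le_sum fun a _ => hterm a).trans ?_
    by_cases hk : ∃ a : Fin r, f a = k
    · obtain ⟨a0, ha0⟩ := hk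
      have : ∀ a : Fin r, (if k = f a then (1:ℕ) else 0) = if a = a0 then 1 else 0 := by
        intro a
        congr 1
        simp only [eq_iff_iff]
        constructor
        · intro hka; exact hf (hka.symm.trans ha0.symm)
        · intro haa; rw [haa, ha0]
      simp only [this]
      rw [Finset.sum_ite_eq' Finset.univ a0 (fun _ => (1:ℕ))]
      simp
    · push_neg at hk
      have : ∀ a : Fin r, (if k = f a then (1:ℕ) else 0) = 0 := fun a => by
        rw [if_neg fun hka => hk a hka.symm]
      simp [this]
  · -- non-injective case: the alternating map vanishes
    rw [Function.not_injective_iff] at hf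
    obtain ⟨a1, a2, hfa, hne⟩ := hf
    have hzero : Matrix.detRowAlternating (fun a => vrow (f a)) = 0 :=
      (Matrix.detRowAlternating (R := R) (n := Fin r)).map_eq_zero_of_eq _
        (by rw [hfa]) hne
    rw [hzero, smul_zero]
    simp


end StructCtrl
end

section
/- Let (A(p), B(p)) be a linearly parameterized matrix pair satisfying the binary assumption, with graph 𝔾. If 𝔾 has no multi-colored subgraph, then rank [A(p) B(p)] < n for every p ∈ ℝ^q, and consequently (A, B) is not structurally controllable. -/
open Matrix BigOperators

namespace StructCtrl

/-! If `rank [A(p) B(p)] = n`, some `n` columns `t` of `[A(p) B(p)]` form a nonsingular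
matrix. Its rows are `∑ k, (p k * g k i) • h k`, so multilinearity expands its determinant
into a sum over colourings `c : Fin n → Fin q` of `∏ i, p (c i) * g (c i) i` times
`det (h (c i) (t j))`. A nonzero term forces `c` and `t` to be injective, and a nonzero
Leibniz term of `det (h (c i) (t j))` matches every head `i` with a tail `t (σ⁻¹ i)`: a
multi-colored subgraph. The columns `A^k B e_j` of the controllability matrix lie in the
column space of `[A B]`, so its rank is below `n` too. -/

theorem exists_det_submatrix_ne_zero_of_rank_eq {K ι : Type*} [Field K] [Fintype ι] {n : ℕ}
    (M : Matrix (Fin n) ι K) (hM : M.rank = n) :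
    ∃ t : Fin n → ι, (M.submatrix id t).det ≠ 0 := by
  obtain ⟨κ, a, ha, hspan, hli⟩ := exists_linearIndependent' K M.col
  have : Fintype κ := Fintype.ofInjective a ha
  have hcard : Fintype.card κ = n := by
    rw [← hM, M.rank_eq_finrank_span_cols, ← hspan, finrank_span_eq_card hli]
  let e : Fin n ≃ κ := (Fintype.equivFinOfCardEq hcard).symm
  refine ⟨a ∘ e, ?_⟩
  rw [← isUnit_iff_ne_zero, ← Matrix.isUnit_iff_isUnit_det,
    ← Matrix.linearIndependent_cols_iff_isUnit]
  exact hli.comp e e.injective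

theorem exists_perm_forall_ne_zero_of_det_ne_zero {R ι : Type*} [CommRing R] [Fintype ι]
    [DecidableEq ι] {M : Matrix ι ι R} (hM : M.det ≠ 0) :
    ∃ σ : Equiv.Perm ι, ∀ i, M (σ i) i ≠ 0 := by
  rw [Matrix.det_apply] at hM
  obtain ⟨σ, -, hσ⟩ := Finset.exists_ne_zero_of_sum_ne_zero hM
  refine ⟨σ, fun i hi => hσ ?_⟩
  rw [Finset.prod_eq_zero (f := fun j => M (σ j) j) (Finset.mem_univ i) hi, smul_zero]

theorem det_paramMat {n q : ℕ} (g h : Fin q → Fin n → ℝ) (p : Fin q → ℝ) :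
    (paramMat g h p).det =
      ∑ c : Fin n → Fin q,
        (∏ i, p (c i) * g (c i) i) * (Matrix.of fun i j => h (c i) j).det := by
  have hrows : paramMat g h p = Matrix.of fun i => ∑ k, (p k * g k i) • h k := by
    ext i j
    simp [paramMat, Finset.sum_apply, mul_assoc]
  rw [hrows]
  change Matrix.detRowAlternating.toMultilinearMap (fun i => ∑ k, (p k * g k i) • h k) = _
  rw [MultilinearMap.map_sum]
  exact Finset.sum_congr rfl fun c _ =>
    MultilinearMap.map_smul_univ _ (fun i => p (c i) * g (c i) i) (fun i => h (c i))

theorem exists_isMCS_of_det_ne_zero {n m q : ℕ} (g : Fin q → Fin n → ℝ)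
    (h : Fin q → Fin (n + m) → ℝ) (p : Fin q → ℝ) (t : Fin n → Fin (n + m))
    (hdet : (paramMat g (fun k j => h k (t j)) p).det ≠ 0) :
    ∃ (t' : Fin n → Fin (n + m)) (c : Fin n → Fin q), IsMCS g h t' c := by
  classical
  rw [det_paramMat] at hdet
  obtain ⟨c, -, hc⟩ := Finset.exists_ne_zero_of_sum_ne_zero hdet
  obtain ⟨hprod, hH⟩ := mul_ne_zero_iff.mp hc
  have hg : ∀ i, g (c i) i ≠ 0 := fun i =>
    right_ne_zero_of_mul (Finset.prod_ne_zero_iff.mp hprod i (Finset.mem_univ i))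
  have hc_inj : Function.Injective c := fun i i' hii' => by_contra fun hne =>
    hH (Matrix.det_zero_of_row_eq hne (funext fun _ => by simp only [Matrix.of_apply, hii']))
  have ht_inj : Function.Injective t := fun j j' hjj' => by_contra fun hne =>
    hH (Matrix.det_zero_of_column_eq hne fun _ => by simp [hjj'])
  obtain ⟨σ, hσ⟩ := exists_perm_forall_ne_zero_of_det_ne_zero hH
  refine ⟨t ∘ σ.symm, c, ht_inj.comp σ.symm.injective, hc_inj,
    fun i => mul_ne_zero (hg i) ?_⟩
  simpa using hσ (σ.symm i)

theorem rank_paramMat_lt_of_not_exists_isMCS {n m q : ℕ} (g : Fin q → Fin n → ℝ)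
    (h : Fin q → Fin (n + m) → ℝ)
    (hno : ¬ ∃ (t : Fin n → Fin (n + m)) (c : Fin n → Fin q), IsMCS g h t c)
    (p : Fin q → ℝ) : (paramMat g h p).rank < n := by
  refine lt_of_le_of_ne ((paramMat g h p).rank_le_card_height.trans_eq (Fintype.card_fin n))
    fun hrank => hno ?_
  obtain ⟨t, ht⟩ := exists_det_submatrix_ne_zero_of_rank_eq _ hrank
  exact exists_isMCS_of_det_ne_zero g h p t ht

section appendCols

variable {R : Type*} [Semiring R] {n k l : ℕ}

def appendCols (A : Matrix (Fin n) (Fin k) R) (B : Matrix (Fin n) (Fin l) R) :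
    Matrix (Fin n) (Fin (k + l)) R :=
  Matrix.of fun i => Fin.append (A i) (B i)

theorem appendCols_mulVec_append (A : Matrix (Fin n) (Fin k) R) (B : Matrix (Fin n) (Fin l) R)
    (u : Fin k → R) (v : Fin l → R) :
    appendCols A B *ᵥ Fin.append u v = A *ᵥ u + B *ᵥ v := by
  ext i
  simp [appendCols, Matrix.mulVec, dotProduct, Fin.sum_univ_add]

theorem ctrbMat_col_mem_range (A : Matrix (Fin n) (Fin n) ℝ) (B : Matrix (Fin n) (Fin l) ℝ)
    (kj : Fin n × Fin l) :
    (ctrbMat A B).col kj ∈ LinearMap.range (appendCols A B).mulVecLin := by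
  obtain ⟨⟨_ | s, -⟩, j⟩ := kj
  · refine ⟨Fin.append 0 (Pi.single j 1), ?_⟩
    ext i
    simp [appendCols_mulVec_append, ctrbMat]
  · refine ⟨Fin.append ((A ^ s * B).col j) 0, ?_⟩
    ext i
    simp only [Matrix.mulVecLin_apply, appendCols_mulVec_append, Matrix.mulVec_zero, add_zero,
      ctrbMat, Matrix.col_apply, Matrix.of_apply, pow_succ', Matrix.mul_assoc]
    rfl

theorem rank_ctrbMat_le (A : Matrix (Fin n) (Fin n) ℝ) (B : Matrix (Fin n) (Fin l) ℝ) :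
    (ctrbMat A B).rank ≤ (appendCols A B).rank := by
  rw [(ctrbMat A B).rank_eq_finrank_span_cols]
  exact Submodule.finrank_mono
    (Submodule.span_le.mpr (Set.range_subset_iff.mpr (ctrbMat_col_mem_range A B)))

end appendCols

theorem paramMat_eq_appendCols {n m q : ℕ} (g : Fin q → Fin n → ℝ)
    (h : Fin q → Fin (n + m) → ℝ) (p : Fin q → ℝ) :
    paramMat g h p = appendCols (Amat g h p) (Bmat g h p) := by
  ext i a
  refine Fin.addCases (fun j => ?_) (fun j => ?_) a <;> simp [appendCols, Amat, Bmat]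

theorem stmt16_general (n m q : ℕ)
    (g : Fin q → Fin n → ℝ) (h : Fin q → Fin (n + m) → ℝ)
    (hno : ¬ ∃ (t : Fin n → Fin (n + m)) (c : Fin n → Fin q), IsMCS g h t c) :
    (∀ p : Fin q → ℝ, (paramMat g h p).rank < n) ∧ ¬ StructurallyControllable g h := by
  have hrank := rank_paramMat_lt_of_not_exists_isMCS g h hno
  refine ⟨hrank, fun ⟨p, hp⟩ => ?_⟩
  have hctrb := rank_ctrbMat_le (Amat g h p) (Bmat g h p)
  rw [← paramMat_eq_appendCols] at hctrb
  exact (hctrb.trans_lt (hrank p)).ne hp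

/-- Under the binary assumption, if the graph `𝔾` of `(A, B)` has no
multi-colored subgraph, then `rank [A(p) B(p)] < n` for every `p`, and consequently
`(A, B)` is not structurally controllable. -/
theorem stmt16 (n m q : ℕ) (hn : 1 ≤ n) (hm : 1 ≤ m) (hq : 1 ≤ q)
    (g : Fin q → Fin n → ℝ) (h : Fin q → Fin (n + m) → ℝ)
    (hbin : BinaryAssumption g h)
    (hno : ¬ ∃ (t : Fin n → Fin (n + m)) (c : Fin n → Fin q), IsMCS g h t c) :
    (∀ p : Fin q → ℝ, (paramMat g h p).rank < n) ∧ ¬ StructurallyControllable g h :=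
  stmt16_general n m q g h hno

end StructCtrl
end

section
/- Let (A(p), B(p)) be a linearly parameterized matrix pair satisfying the unitary assumption, with graph 𝔾. Then 𝔾 has an unbalanced similarity class of multi-colored subgraphs if and only if 𝔾 has at least one multi-colored subgraph. -/
open Matrix BigOperators

namespace StructCtrl

lemma cast_or_nat {n m : ℕ} (v : Fin (n + m)) :
    (∃ i : Fin n, Fin.castAdd m i = v) ↔ ¬ ∃ j : Fin m, Fin.natAdd n j = v := by
  constructor
  · rintro ⟨i, rfl⟩ ⟨j, hj⟩
    have := congrArg Fin.val hj
    have hi := i.isLt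
    simp [Fin.natAdd, Fin.castAdd, Fin.castLE] at this
    omega
  · intro hne
    by_cases hv : (v : ℕ) < n
    · exact ⟨⟨v, hv⟩, by ext; simp⟩
    · have hvlt := v.isLt
      exact absurd ⟨⟨(v : ℕ) - n, by omega⟩, by ext; simp; omega⟩ hne

lemma exists_matrimonial {n m : ℕ} (t : Fin n → Fin (n + m)) (ht : Function.Injective t) :
    ∃ μ : Equiv.Perm (Fin (n + m)), IsMatrimonial t μ := by
  classical
  set R : Finset (Fin (n + m)) := Finset.image t Finset.univ with hR
  set C : Finset (Fin (n + m)) := Finset.image (Fin.castAdd m) Finset.univ with hC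
  have hcastinj : Function.Injective (Fin.castAdd m : Fin n → Fin (n + m)) := by
    intro a b hab
    have := congrArg Fin.val hab
    exact Fin.ext (by simpa using this)
  have hRcard : R.card = n := by
    rw [hR, Finset.card_image_of_injective _ ht]; simp
  have hCcard : C.card = n := by
    rw [hC, Finset.card_image_of_injective _ hcastinj]; simp
  have hsinkmem : ∀ v, IsPureSink t v ↔ v ∈ C \ R := by
    intro v
    simp only [IsPureSink, Finset.mem_sdiff, hC, hR, Finset.mem_image, Finset.mem_univ,
      true_and]
    tauto
  have hsrcmem : ∀ v, IsPureSource t v ↔ v ∈ R \ C := by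
    intro v
    simp only [IsPureSource, Finset.mem_sdiff, hC, hR, Finset.mem_image, Finset.mem_univ,
      true_and]
    constructor
    · rintro ⟨h1, h2⟩
      exact ⟨h1, fun hc => (cast_or_nat v).mp hc h2⟩
    · rintro ⟨h1, h2⟩
      refine ⟨h1, ?_⟩
      by_contra hn2
      exact h2 ((cast_or_nat v).mpr hn2)
  have hcard : Fintype.card {v : Fin (n + m) // IsPureSink t v}
      = Fintype.card {v : Fin (n + m) // IsPureSource t v} := by
    rw [Fintype.card_subtype, Fintype.card_subtype]
    have e1 : Finset.filter (IsPureSink t) Finset.univ = C \ R := by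
      ext v; simp [hsinkmem v]
    have e2 : Finset.filter (IsPureSource t) Finset.univ = R \ C := by
      ext v; simp [hsrcmem v]
    rw [e1, e2]
    have h1 := Finset.card_sdiff_add_card_inter C R
    have h2 := Finset.card_sdiff_add_card_inter R C
    rw [Finset.inter_comm] at h2
    omega
  let e := Fintype.equivOfCardEq hcard
  have hdisj : ∀ v, IsPureSink t v → IsPureSource t v → False := by
    rintro v ⟨h1, -⟩ ⟨h2, -⟩
    exact h1 h2
  let f : Fin (n + m) → Fin (n + m) := fun v =>
    if hv : IsPureSink t v then (e ⟨v, hv⟩ : {w // IsPureSource t w})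
    else if hv' : IsPureSource t v then (e.symm ⟨v, hv'⟩ : {w // IsPureSink t w})
    else v
  have hfsink : ∀ v (hv : IsPureSink t v), f v = (e ⟨v, hv⟩ : {w // IsPureSource t w}) :=
    fun v hv => dif_pos hv
  have hfsrc : ∀ v (hv' : IsPureSource t v),
      f v = (e.symm ⟨v, hv'⟩ : {w // IsPureSink t w}) := by
    intro v hv'
    have hv : ¬ IsPureSink t v := fun hs => hdisj v hs hv'
    simp only [f, dif_neg hv, dif_pos hv']
  have hfother : ∀ v, ¬ IsPureSink t v → ¬ IsPureSource t v → f v = v := by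
    intro v h1 h2
    simp only [f, dif_neg h1, dif_neg h2]
  have hinv : Function.Involutive f := by
    intro v
    by_cases hv : IsPureSink t v
    · rw [hfsink v hv]
      have hs := (e ⟨v, hv⟩).2
      rw [hfsrc _ hs]
      simp
    · by_cases hv' : IsPureSource t v
      · rw [hfsrc v hv']
        have hs := (e.symm ⟨v, hv'⟩).2
        rw [hfsink _ hs]
        simp
      · rw [hfother v hv hv', hfother v hv hv']
  refine ⟨hinv.toPerm f, ?_⟩
  intro v
  constructor
  · intro hv
    rw [show (hinv.toPerm f) v = f v from rfl, hfsink v hv]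
    exact (e ⟨v, hv⟩).2
  · intro hs
    rw [show (hinv.toPerm f) v = f v from rfl] at hs
    by_cases hv : IsPureSink t v
    · exact hv
    · by_cases hv' : IsPureSource t v
      · rw [hfsrc v hv'] at hs
        exact absurd hs (fun hss => hdisj _ (e.symm ⟨v, hv'⟩).2 hss)
      · rw [hfother v hv hv'] at hs
        exact absurd hs hv'

lemma mcs_determined {n m q : ℕ} (g : Fin q → Fin n → ℝ) (h : Fin q → Fin (n + m) → ℝ)
    (huni : UnitaryAssumption g h) (t : Fin n → Fin (n + m)) (c : Fin n → Fin q)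
    (hmcs : IsMCS g h t c) (t' : Fin n → Fin (n + m)) (c' : Fin n → Fin q)
    (hmcs' : IsMCS g h t' c') (hrc : Set.range c' = Set.range c) :
    t' = t ∧ c' = c := by
  obtain ⟨hg, hh, -⟩ := huni
  obtain ⟨ht', hc', harc'⟩ := hmcs'
  obtain ⟨ht, hc, harc⟩ := hmcs
  have hcc : c' = c := by
    funext i
    have hmem : c' i ∈ Set.range c := hrc ▸ Set.mem_range_self i
    obtain ⟨i0, hi0⟩ := hmem
    obtain ⟨i1, hg1⟩ := hg (c' i)
    have h1 : g (c' i) i ≠ 0 := left_ne_zero_of_mul (harc' i)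
    have h2 : g (c' i) i0 ≠ 0 := by rw [← hi0]; exact left_ne_zero_of_mul (harc i0)
    rw [hg1] at h1 h2
    have e1 : i = i1 := by
      by_contra hne
      exact h1 (Pi.single_eq_of_ne hne 1)
    have e2 : i0 = i1 := by
      by_contra hne
      exact h2 (Pi.single_eq_of_ne hne 1)
    rw [← hi0, e2, ← e1]
  refine ⟨?_, hcc⟩
  funext i
  obtain ⟨j1, hh1⟩ := hh (c i)
  have h1 : h (c i) (t' i) ≠ 0 := by
    have := right_ne_zero_of_mul (harc' i)
    rwa [hcc] at this
  have h2 : h (c i) (t i) ≠ 0 := right_ne_zero_of_mul (harc i)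
  rw [hh1] at h1 h2
  have e1 : t' i = j1 := by
    by_contra hne
    exact h1 (Pi.single_eq_of_ne hne 1)
  have e2 : t i = j1 := by
    by_contra hne
    exact h2 (Pi.single_eq_of_ne hne 1)
  rw [e1, e2]

/-- Under the unitary assumption, the graph `𝔾` of `(A, B)` has an
unbalanced similarity class of multi-colored subgraphs iff it has at least one
multi-colored subgraph. -/
theorem stmt17 (n m q : ℕ) (hn : 1 ≤ n) (hm : 1 ≤ m) (hq : 1 ≤ q)
    (g : Fin q → Fin n → ℝ) (h : Fin q → Fin (n + m) → ℝ)
    (huni : UnitaryAssumption g h) :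
    HasUnbalancedClass g h ↔
      ∃ (t : Fin n → Fin (n + m)) (c : Fin n → Fin q), IsMCS g h t c := by
  classical
  constructor
  · rintro ⟨t, c, μ, hmcs, -, -⟩
    exact ⟨t, c, hmcs⟩
  · rintro ⟨t, c, hmcs⟩
    obtain ⟨μ, hμ⟩ := exists_matrimonial t hmcs.1
    refine ⟨t, c, μ, hmcs, hμ, ?_⟩
    have huniq : ∀ tc : (Fin n → Fin (n + m)) × (Fin n → Fin q),
        IsMCS g h tc.1 tc.2 → Set.range tc.1 = Set.range t →
        Set.range tc.2 = Set.range c → tc = (t, c) := by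
      rintro ⟨t', c'⟩ hmcs' hrt hrc
      obtain ⟨h1, h2⟩ := mcs_determined g h huni t c hmcs t' c' hmcs' hrc
      rw [h1, h2]
    rcases Nat.even_or_odd (quotCycleCount t μ) with he | ho
    · have hodd : {tc : (Fin n → Fin (n + m)) × (Fin n → Fin q) |
          IsMCS g h tc.1 tc.2 ∧ Set.range tc.1 = Set.range t ∧
          Set.range tc.2 = Set.range c ∧ Odd (quotCycleCount tc.1 μ)} = ∅ := by
        ext tc
        simp only [Set.mem_setOf_eq, Set.mem_empty_iff_false, iff_false, not_and]
        intro h1 h2 h3 h4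
        have heq : tc.1 = t := congrArg Prod.fst (huniq tc h1 h2 h3)
        rw [heq] at h4
        exact (Nat.not_odd_iff_even.mpr he) h4
      have heven : {tc : (Fin n → Fin (n + m)) × (Fin n → Fin q) |
          IsMCS g h tc.1 tc.2 ∧ Set.range tc.1 = Set.range t ∧
          Set.range tc.2 = Set.range c ∧ Even (quotCycleCount tc.1 μ)} = {(t, c)} := by
        ext tc
        simp only [Set.mem_setOf_eq, Set.mem_singleton_iff]
        constructor
        · rintro ⟨h1, h2, h3, -⟩
          exact huniq tc h1 h2 h3
        · rintro rfl
          exact ⟨hmcs, rfl, rfl, he⟩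
      rw [hodd, heven, Set.ncard_empty, Set.ncard_singleton]
      simp
    · have hodd : {tc : (Fin n → Fin (n + m)) × (Fin n → Fin q) |
          IsMCS g h tc.1 tc.2 ∧ Set.range tc.1 = Set.range t ∧
          Set.range tc.2 = Set.range c ∧ Odd (quotCycleCount tc.1 μ)} = {(t, c)} := by
        ext tc
        simp only [Set.mem_setOf_eq, Set.mem_singleton_iff]
        constructor
        · rintro ⟨h1, h2, h3, -⟩
          exact huniq tc h1 h2 h3
        · rintro rfl
          exact ⟨hmcs, rfl, rfl, ho⟩
      have heven : {tc : (Fin n → Fin (n + m)) × (Fin n → Fin q) |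
          IsMCS g h tc.1 tc.2 ∧ Set.range tc.1 = Set.range t ∧
          Set.range tc.2 = Set.range c ∧ Even (quotCycleCount tc.1 μ)} = ∅ := by
        ext tc
        simp only [Set.mem_setOf_eq, Set.mem_empty_iff_false, iff_false, not_and]
        intro h1 h2 h3 h4
        have heq : tc.1 = t := congrArg Prod.fst (huniq tc h1 h2 h3)
        rw [heq] at h4
        exact (Nat.not_even_iff_odd.mpr ho) h4
      rw [hodd, heven, Set.ncard_empty, Set.ncard_singleton]
      simp

end StructCtrl
end
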